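/- For every A∈ℕ, every integer j with 0≤j<2^A, and every x∈G: D_{2^A+j}^κ(x) = D_{2^A}^w(x) + r_A(x)·D_j^w(τ_A(x)). -/

import Mathlib

open MeasureTheory Filter

noncomputable section

/-- The Walsh group `G`: countable product of `ℤ/2ℤ`. -/
abbrev G : Type := ℕ → ZMod 2

instance : TopologicalSpace (ZMod 2) := ⊥
instance : DiscreteTopology (ZMod 2) := ⟨rfl⟩
instance : MeasurableSpace (ZMod 2) := ⊤
instance : BorelSpace (ZMod 2) := ⟨borel_eq_top_of_discrete.symm⟩
instance : IsTopologicalAddGroup (ZMod 2) where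
  continuous_add := continuous_of_discreteTopology
  continuous_neg := continuous_of_discreteTopology

/-- The normalized Haar (probability) measure on the Walsh group. -/
def μG : Measure G := Measure.addHaarMeasure ⊤

/-- The `k`-th Rademacher function. -/
def rademacher (k : ℕ) (x : G) : ℝ := (-1 : ℝ) ^ (x k).val

/-- The Walsh-Paley functions. -/
def walsh (n : ℕ) (x : G) : ℝ :=
  ∏ k ∈ Finset.range n.size, if n.testBit k then rademacher k x else 1

/-- The Walsh-Kaczmarz functions. -/
def kaczmarz (n : ℕ) (x : G) : ℝ :=
  if n = 0 then 1 else
    rademacher (Nat.log 2 n) x *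
      ∏ k ∈ Finset.range (Nat.log 2 n),
        if n.testBit k then rademacher (Nat.log 2 n - 1 - k) x else 1

/-- Walsh-Paley Dirichlet kernel. -/
def walshDirichlet (n : ℕ) (x : G) : ℝ := ∑ k ∈ Finset.range n, walsh k x

/-- Walsh-Kaczmarz Dirichlet kernel. -/
def kaczDirichlet (n : ℕ) (x : G) : ℝ := ∑ k ∈ Finset.range n, kaczmarz k x

/-- 1D Walsh-Kaczmarz-Fourier coefficient. -/
def kaczCoeff (f : G → ℝ) (k : ℕ) : ℝ := ∫ x, f x * kaczmarz k x ∂μG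

/-- 1D Walsh-Kaczmarz-Fourier partial sum `S_n^κ(f;x)`. -/
def kaczPartialSum (n : ℕ) (f : G → ℝ) (x : G) : ℝ :=
  ∑ k ∈ Finset.range n, kaczCoeff f k * kaczmarz k x

/-- Product measure on `G²`. -/
def μG2 : Measure (G × G) := μG.prod μG

/-- 2D Walsh-Kaczmarz-Fourier coefficient. -/
def kaczCoeff2 (f : G × G → ℝ) (k i : ℕ) : ℝ :=
  ∫ p, f p * kaczmarz k p.1 * kaczmarz i p.2 ∂μG2

/-- 2D Walsh-Kaczmarz-Fourier partial sum `S_{n,m}^κ(f;x,y)`. -/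
def kaczPartialSum2 (n m : ℕ) (f : G × G → ℝ) (p : G × G) : ℝ :=
  ∑ k ∈ Finset.range n, ∑ i ∈ Finset.range m,
    kaczCoeff2 f k i * kaczmarz k p.1 * kaczmarz i p.2

/-- Supremum norm on `G²`. -/
def supNorm (f : G × G → ℝ) : ℝ := ⨆ p : G × G, |f p|

/-- `E_l^{(1)}(f)`: partial best approximation in the first variable. -/
def E1 (f : G × G → ℝ) (l : ℕ) : ℝ :=
  sInf { e : ℝ | ∃ α : ℕ → G → ℝ, (∀ j, Continuous (α j)) ∧
    e = supNorm (fun p => f p - ∑ j ∈ Finset.range l, α j p.2 * kaczmarz j p.1) }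

/-- `E_r^{(2)}(f)`: partial best approximation in the second variable. -/
def E2 (f : G × G → ℝ) (r : ℕ) : ℝ :=
  sInf { e : ℝ | ∃ β : ℕ → G → ℝ, (∀ j, Continuous (β j)) ∧
    e = supNorm (fun p => f p - ∑ j ∈ Finset.range r, β j p.1 * kaczmarz j p.2) }

/-- `E_{l,r}(f)`: best approximation by 2D Walsh-Kaczmarz polynomials. -/
def Ebox (f : G × G → ℝ) (l r : ℕ) : ℝ :=
  sInf { e : ℝ | ∃ c : ℕ → ℕ → ℝ,
    e = supNorm (fun p => f p -
      ∑ k ∈ Finset.range l, ∑ i ∈ Finset.range r,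
        c k i * kaczmarz k p.1 * kaczmarz i p.2) }

/-- The class `Ψ`: increasing on `[0,∞)`, `ψ(0) = lim_{u→0+} ψ(u) = 0`. -/
def PsiClass (ψ : ℝ → ℝ) : Prop :=
  MonotoneOn ψ (Set.Ici 0) ∧ ψ 0 = 0 ∧
    Tendsto ψ (nhdsWithin 0 (Set.Ioi 0)) (nhds 0)

/-- The coordinate-reversing transformation `τ_A`. -/
def tau (A : ℕ) (x : G) : G := fun i => if i < A then x (A - 1 - i) else x i

end


/-!
For `2 ^ A ≤ n < 2 ^ (A + 1)` both systems split off the leading Rademacher factor: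
`w_n = r_A · w_{n - 2^A}` and `κ_n = r_A · w_{n - 2^A} ∘ τ_A`. Hence both Dirichlet kernels
split at `2 ^ A`. The dyadic kernel `D_{2^A}^w = ∏_{i<A} (1 + r_i)` is symmetric in the first
`A` coordinates, so it is `τ_A`-invariant, and induction on `A` gives `D_{2^A}^κ = D_{2^A}^w`.
-/

open Finset

lemma walsh_eq_prod_range {n N : ℕ} (h : n < 2 ^ N) (x : G) :
    walsh n x = ∏ k ∈ range N, if n.testBit k then rademacher k x else 1 := by
  refine prod_subset (by simpa [range_subset_range, Nat.size_le] using h) fun k _ hk => ?_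
  have hkn : n < 2 ^ k :=
    (Nat.lt_size_self n).trans_le (Nat.pow_le_pow_right two_pos (by simpa using hk))
  simp [Nat.testBit_eq_false_of_lt hkn]

lemma rademacher_tau {A k : ℕ} (hk : k < A) (x : G) :
    rademacher k (tau A x) = rademacher (A - 1 - k) x := by
  simp [rademacher, tau, hk]

lemma walsh_two_pow_add {A m : ℕ} (hm : m < 2 ^ A) (x : G) :
    walsh (2 ^ A + m) x = rademacher A x * walsh m x := by
  have h : 2 ^ A + m < 2 ^ (A + 1) := by rw [pow_succ]; omega
  rw [walsh_eq_prod_range h, prod_range_succ, walsh_eq_prod_range hm,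
    Nat.testBit_two_pow_add_eq, Nat.testBit_eq_false_of_lt hm, mul_comm]
  simp only [Bool.not_false, if_true]
  exact congrArg _ (prod_congr rfl fun k hk => by
    rw [Nat.testBit_two_pow_add_gt (mem_range.mp hk)])

lemma kaczmarz_two_pow_add {A m : ℕ} (hm : m < 2 ^ A) (x : G) :
    kaczmarz (2 ^ A + m) x = rademacher A x * walsh m (tau A x) := by
  have hlog : Nat.log 2 (2 ^ A + m) = A :=
    Nat.log_eq_of_pow_le_of_lt_pow (Nat.le_add_right _ _) (by rw [pow_succ]; omega)
  rw [kaczmarz, if_neg (by positivity), hlog, walsh_eq_prod_range hm]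
  exact congrArg _ (prod_congr rfl fun k hk => by
    rw [Nat.testBit_two_pow_add_gt (mem_range.mp hk), rademacher_tau (mem_range.mp hk)])

lemma walshDirichlet_two_pow_add {A j : ℕ} (hj : j ≤ 2 ^ A) (x : G) :
    walshDirichlet (2 ^ A + j) x
      = walshDirichlet (2 ^ A) x + rademacher A x * walshDirichlet j x := by
  rw [walshDirichlet, sum_range_add, walshDirichlet, walshDirichlet, mul_sum]
  exact congrArg _ (sum_congr rfl fun m hm =>
    walsh_two_pow_add ((mem_range.mp hm).trans_le hj) x)

lemma kaczDirichlet_two_pow_add {A j : ℕ} (hj : j ≤ 2 ^ A) (x : G) :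
    kaczDirichlet (2 ^ A + j) x
      = kaczDirichlet (2 ^ A) x + rademacher A x * walshDirichlet j (tau A x) := by
  rw [kaczDirichlet, sum_range_add, kaczDirichlet, walshDirichlet, mul_sum]
  exact congrArg _ (sum_congr rfl fun m hm =>
    kaczmarz_two_pow_add ((mem_range.mp hm).trans_le hj) x)

lemma walshDirichlet_two_pow_eq_prod (A : ℕ) (x : G) :
    walshDirichlet (2 ^ A) x = ∏ i ∈ range A, (1 + rademacher i x) := by
  induction A with
  | zero => simp [walshDirichlet, walsh]
  | succ A ih =>
    rw [pow_succ, mul_two, walshDirichlet_two_pow_add le_rfl, prod_range_succ, ← ih]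
    ring

lemma walshDirichlet_two_pow_tau (A : ℕ) (x : G) :
    walshDirichlet (2 ^ A) (tau A x) = walshDirichlet (2 ^ A) x := by
  rw [walshDirichlet_two_pow_eq_prod, walshDirichlet_two_pow_eq_prod,
    ← prod_range_reflect (fun i => 1 + rademacher i x) A]
  exact prod_congr rfl fun i hi => by rw [rademacher_tau (mem_range.mp hi)]

lemma kaczDirichlet_two_pow (A : ℕ) (x : G) :
    kaczDirichlet (2 ^ A) x = walshDirichlet (2 ^ A) x := by
  induction A with
  | zero => simp [kaczDirichlet, walshDirichlet, kaczmarz, walsh]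
  | succ A ih =>
    rw [pow_succ, mul_two, kaczDirichlet_two_pow_add le_rfl, walshDirichlet_two_pow_add le_rfl,
      ih, walshDirichlet_two_pow_tau]

/-- Skvortsov's identity for Walsh-Kaczmarz Dirichlet kernels. -/
theorem statement14 (A : ℕ) (j : ℕ) (hj : j < 2 ^ A) (x : G) :
    kaczDirichlet (2 ^ A + j) x
      = walshDirichlet (2 ^ A) x + rademacher A x * walshDirichlet j (tau A x) := by
  rw [kaczDirichlet_two_pow_add hj.le, kaczDirichlet_two_pow]
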